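/- Fox derivative of the even Artin relation: let A_ℓ(a,b) denote the word (ab)^ℓ(ba)^{-ℓ} in the free group on generators including a and b, and let φ be the abelianization map to the Laurent polynomial ring sending a ↦ t_a, b ↦ t_b. Writing p_ℓ(t) = (t^ℓ − 1)/(t − 1) = 1 + t + ⋯ + t^{ℓ−1}, the abelianized Fox derivatives satisfy ∂A_ℓ(a,b)/∂a = −(t_b − 1)·p_ℓ(t_a t_b), ∂A_ℓ(a,b)/∂b = (t_a − 1)·p_ℓ(t_a t_b), and ∂A_ℓ(a,b)/∂g = 0 for any other generator g. -/
import Mathlib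


/-- Fox derivatives of the even Artin relation `A_ℓ(a,b) = (ab)^ℓ(ba)^{-ℓ}`.
For any family of maps `D j` satisfying the Fox derivative rules (with respect to the
abelianization `φ` sending each generator `g` to `t g`), one has
`∂A_ℓ(a,b)/∂a = −(t_b − 1)·p_ℓ(t_a t_b)`, `∂A_ℓ(a,b)/∂b = (t_a − 1)·p_ℓ(t_a t_b)`, and
`∂A_ℓ(a,b)/∂g = 0` for any other generator `g`, where `p_ℓ(t) = 1 + t + ⋯ + t^{ℓ−1}`. -/
theorem fox_deriv_even_artin_relation (α : Type) [DecidableEq α] (R : Type) [CommRing R]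
    (t : α → R) (φ : FreeGroup α →* Rˣ)
    (hφ : ∀ g : α, (φ (FreeGroup.of g) : R) = t g)
    (D : α → FreeGroup α → R)
    (Dmul : ∀ j u v, D j (u * v) = D j u + (φ u : R) * D j v)
    (Done : ∀ j, D j 1 = 0)
    (Dgen : ∀ j i, D j (FreeGroup.of i) = if i = j then 1 else 0)
    (a b : α) (hab : a ≠ b) (ℓ : ℕ) :
    D a ((FreeGroup.of a * FreeGroup.of b) ^ ℓ * ((FreeGroup.of b * FreeGroup.of a) ^ ℓ)⁻¹) =
      -(t b - 1) * (∑ i ∈ Finset.range ℓ, (t a * t b) ^ i) ∧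
    D b ((FreeGroup.of a * FreeGroup.of b) ^ ℓ * ((FreeGroup.of b * FreeGroup.of a) ^ ℓ)⁻¹) =
      (t a - 1) * (∑ i ∈ Finset.range ℓ, (t a * t b) ^ i) ∧
    ∀ g : α, g ≠ a → g ≠ b →
      D g ((FreeGroup.of a * FreeGroup.of b) ^ ℓ * ((FreeGroup.of b * FreeGroup.of a) ^ ℓ)⁻¹) =
        0 := by
  set w1 := (FreeGroup.of a * FreeGroup.of b) ^ ℓ with hw1
  set w2 := (FreeGroup.of b * FreeGroup.of a) ^ ℓ with hw2
  -- the abelianization kills the difference between w1 and w2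
  have hφeq : φ w1 = φ w2 := by
    rw [hw1, hw2, map_pow, map_pow, map_mul, map_mul, mul_comm]
  -- power rule
  have Dpow : ∀ (j : α) (w : FreeGroup α) (n : ℕ),
      D j (w ^ n) = (∑ i ∈ Finset.range n, ((φ w : R)) ^ i) * D j w := by
    intro j w n
    induction n with
    | zero => simp [Done]
    | succ n ih =>
      rw [pow_succ, Dmul, ih, Finset.sum_range_succ]
      have : ((φ (w ^ n) : Rˣ) : R) = (φ w : R) ^ n := by
        rw [map_pow, Units.val_pow_eq_pow_val]
      rw [this]; ring
  -- difference rule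
  have key : ∀ j : α, D j (w1 * w2⁻¹) = D j w1 - D j w2 := by
    intro j
    have h2 : D j (w2 * w2⁻¹) = D j w2 + (φ w2 : R) * D j w2⁻¹ := Dmul j w2 w2⁻¹
    rw [mul_inv_cancel, Done] at h2
    have h3 : (φ w2 : R) * D j w2⁻¹ = - D j w2 := by linear_combination -h2
    rw [Dmul, hφeq, h3]; ring
  have hab' : b ≠ a := hab.symm
  have hφab : ((φ (FreeGroup.of a * FreeGroup.of b) : Rˣ) : R) = t a * t b := by
    rw [map_mul, Units.val_mul, hφ, hφ]
  have hφba : ((φ (FreeGroup.of b * FreeGroup.of a) : Rˣ) : R) = t a * t b := by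
    rw [map_mul, Units.val_mul, hφ, hφ, mul_comm]
  have hD : ∀ j : α, D j (w1 * w2⁻¹) =
      (∑ i ∈ Finset.range ℓ, (t a * t b) ^ i) *
        (D j (FreeGroup.of a * FreeGroup.of b) - D j (FreeGroup.of b * FreeGroup.of a)) := by
    intro j
    rw [key, hw1, hw2, Dpow, Dpow, hφab, hφba]; ring
  refine ⟨?_, ?_, ?_⟩
  · rw [hD, Dmul, Dmul]
    simp only [Dgen, if_neg hab, if_neg hab', hφ, if_pos trivial]; ring
  · rw [hD, Dmul, Dmul]
    simp only [Dgen, if_neg hab, if_neg hab', hφ, if_pos trivial]; ring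
  · intro g hga hgb
    rw [hD, Dmul, Dmul]
    simp [Dgen, hga.symm, hgb.symm]
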